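/- arXiv:2012.14001 — 2 statements merged into one kernel-verified Lean document; each statement's English description precedes it below -/
import Mathlib

section
/- Let V_1, …, V_k be complex n × m matrices with Σ_{r=1}^k V_rᴴ * V_r = 1_m, and let Φ : Matrix n n ℂ → Matrix m m ℂ be Φ(a) = Σ_r V_rᴴ * a * V_r. If m₀ ∈ Matrix n n ℂ saturates the Schwarz inequality, i.e. Φ(m₀ᴴ * m₀) = Φ(m₀)ᴴ * Φ(m₀), then for every a ∈ Matrix n n ℂ the bimodule identities hold: Φ(m₀ᴴ * a) = Φ(m₀)ᴴ * Φ(a) and Φ(aᴴ * m₀) = Φ(a)ᴴ * Φ(m₀). -/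
/-!
For the unital Kraus map `Φ a = ∑ r, (V r)ᴴ * a * V r`, the Schwarz defect
`Φ(xᴴx) - Φ(x)ᴴΦ(x)` equals `∑ r, (x V r - V r Φ(x))ᴴ (x V r - V r Φ(x))`, a sum of positive
semidefinite matrices. Saturation forces every term to vanish, so `m₀ V r = V r Φ(m₀)` for all
`r`, and both bimodule identities follow by moving `m₀` through the `V r`.
-/

open Matrix

namespace Matrix

section KrausMap

variable {ι n m R : Type*} [Fintype ι] [Fintype n] [CommRing R] [StarRing R]

def krausMap (V : ι → Matrix n m R) (a : Matrix n n R) : Matrix m m R :=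
  ∑ r, (V r)ᴴ * a * V r

lemma krausMap_conjTranspose (V : ι → Matrix n m R) (a : Matrix n n R) :
    krausMap V aᴴ = (krausMap V a)ᴴ := by
  simp only [krausMap, conjTranspose_sum, conjTranspose_mul, conjTranspose_conjTranspose,
    Matrix.mul_assoc]

lemma krausMap_mul_of_mul_eq [Fintype m] {V : ι → Matrix n m R} {x : Matrix n n R}
    {y : Matrix m m R} (h : ∀ r, x * V r = V r * y) (a : Matrix n n R) :
    krausMap V (a * x) = krausMap V a * y := by
  simp only [krausMap, Finset.sum_mul, Matrix.mul_assoc, h]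

lemma krausMap_conjTranspose_mul_of_mul_eq [Fintype m] {V : ι → Matrix n m R} {x : Matrix n n R}
    {y : Matrix m m R} (h : ∀ r, x * V r = V r * y) (a : Matrix n n R) :
    krausMap V (xᴴ * a) = yᴴ * krausMap V a := by
  rw [← conjTranspose_conjTranspose (xᴴ * a), krausMap_conjTranspose, conjTranspose_mul,
    conjTranspose_conjTranspose, krausMap_mul_of_mul_eq h, conjTranspose_mul,
    krausMap_conjTranspose, conjTranspose_conjTranspose]

lemma sum_conjTranspose_mul_self_sub_krausMap [Fintype m] [DecidableEq m] {V : ι → Matrix n m R}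
    (hV : ∑ r, (V r)ᴴ * V r = 1) (x : Matrix n n R) :
    ∑ r, (x * V r - V r * krausMap V x)ᴴ * (x * V r - V r * krausMap V x) =
      krausMap V (xᴴ * x) - (krausMap V x)ᴴ * krausMap V x := by
  set y := krausMap V x
  have hterm : ∀ r, (x * V r - V r * y)ᴴ * (x * V r - V r * y) =
      (V r)ᴴ * (xᴴ * x) * V r - (V r)ᴴ * xᴴ * V r * y - yᴴ * ((V r)ᴴ * x * V r)
        + yᴴ * ((V r)ᴴ * V r) * y := by
    intro r
    simp only [conjTranspose_sub, conjTranspose_mul, Matrix.sub_mul, Matrix.mul_sub,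
      Matrix.mul_assoc]
    abel
  have hadj : ∑ r, (V r)ᴴ * xᴴ * V r = yᴴ := krausMap_conjTranspose V x
  simp only [hterm, Finset.sum_add_distrib, Finset.sum_sub_distrib, ← Finset.sum_mul,
    ← Finset.mul_sum, hadj, hV]
  simp only [krausMap, Matrix.mul_one, y]
  abel

end KrausMap

open scoped ComplexOrder MatrixOrder in
lemma eq_zero_of_sum_conjTranspose_mul_self_eq_zero {ι n m 𝕜 : Type*} [Fintype ι] [Fintype n]
    [Finite m] [RCLike 𝕜] {W : ι → Matrix n m 𝕜} (h : ∑ r, (W r)ᴴ * W r = 0) (r : ι) :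
    W r = 0 := by
  have hnonneg : ∀ r ∈ Finset.univ, 0 ≤ (W r)ᴴ * W r :=
    fun r _ => (posSemidef_conjTranspose_mul_self (W r)).nonneg
  exact conjTranspose_mul_self_eq_zero.mp
    ((Finset.sum_eq_zero_iff_of_nonneg hnonneg).mp h r (Finset.mem_univ r))

lemma mul_eq_mul_krausMap_of_schwarz_eq {ι n m 𝕜 : Type*} [Fintype ι] [Fintype n] [Fintype m]
    [DecidableEq m] [RCLike 𝕜] {V : ι → Matrix n m 𝕜} (hV : ∑ r, (V r)ᴴ * V r = 1)
    {x : Matrix n n 𝕜} (hsat : krausMap V (xᴴ * x) = (krausMap V x)ᴴ * krausMap V x)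
    (r : ι) : x * V r = V r * krausMap V x := by
  rw [← sub_eq_zero]
  refine eq_zero_of_sum_conjTranspose_mul_self_eq_zero
    (W := fun r => x * V r - V r * krausMap V x) ?_ r
  rw [sum_conjTranspose_mul_self_sub_krausMap hV, hsat, sub_self]

end Matrix

/-- If `m₀` saturates the Schwarz inequality for the unital completely positive map `Φ`,
then the bimodule identities `Φ(m₀ᴴ a) = Φ(m₀)ᴴ Φ(a)` and `Φ(aᴴ m₀) = Φ(a)ᴴ Φ(m₀)` hold. -/
theorem schwarz_saturation_imp_bimodule
    {n m k : ℕ} (V : Fin k → Matrix (Fin n) (Fin m) ℂ)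
    (hV : ∑ r, (V r)ᴴ * V r = 1)
    (m₀ : Matrix (Fin n) (Fin n) ℂ)
    (hsat : (∑ r, (V r)ᴴ * (m₀ᴴ * m₀) * V r) =
      (∑ r, (V r)ᴴ * m₀ * V r)ᴴ * (∑ r, (V r)ᴴ * m₀ * V r)) :
    ∀ a : Matrix (Fin n) (Fin n) ℂ,
      (∑ r, (V r)ᴴ * (m₀ᴴ * a) * V r) =
        (∑ r, (V r)ᴴ * m₀ * V r)ᴴ * (∑ r, (V r)ᴴ * a * V r) ∧
      (∑ r, (V r)ᴴ * (aᴴ * m₀) * V r) =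
        (∑ r, (V r)ᴴ * a * V r)ᴴ * (∑ r, (V r)ᴴ * m₀ * V r) := by
  have hinter := mul_eq_mul_krausMap_of_schwarz_eq hV hsat
  intro a
  refine ⟨krausMap_conjTranspose_mul_of_mul_eq hinter a, ?_⟩
  change krausMap V (aᴴ * m₀) = (krausMap V a)ᴴ * krausMap V m₀
  rw [krausMap_mul_of_mul_eq hinter, krausMap_conjTranspose]
end

section
/- Let S be a unital star-subalgebra of Matrix n n ℂ, let ρ, ω ∈ Matrix n n ℂ be positive definite with Tr ρ = Tr ω = 1, and let ρ_C, ω_C ∈ S be positive definite with Tr(ρ_C * c) = Tr(ρ * c) and Tr(ω_C * c) = Tr(ω * c) for all c ∈ S. Let E be a ρ-preserving conditional expectation from Matrix n n ℂ onto S. Then E also preserves ω, i.e. Tr(ω * E(a)) = Tr(ω * a) for all a ∈ Matrix n n ℂ, if and only if the sufficiency condition ω^{1/2} * ω_C^{-1/2} = ρ^{1/2} * ρ_C^{-1/2} holds. -/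
open Matrix
open scoped ComplexOrder
open scoped MatrixOrder

/-- A linear map between complex matrix algebras is completely positive if for every `k ≥ 1`
its blockwise application to `k × k` block matrices sends positive semidefinite matrices to
positive semidefinite matrices. -/
def IsCP {n m : Type*} [Fintype n] [Fintype m]
    (Φ : Matrix n n ℂ → Matrix m m ℂ) : Prop :=
  ∀ (k : ℕ) (M : Matrix (n × Fin k) (n × Fin k) ℂ), M.PosSemidef →
    (Matrix.of fun p q : m × Fin k =>
      Φ (Matrix.of fun i j => M (i, p.2) (j, q.2)) p.1 q.1).PosSemidef

/-- A conditional expectation onto a unital star-subalgebra `S` (given by its carrier set)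
is a unital completely positive linear map with range inside `S`, fixing every element of
`S`, and satisfying the `S`-bimodule property. -/
def IsCondExpOn {d : Type*} [Fintype d] [DecidableEq d] (S : Set (Matrix d d ℂ))
    (E : Matrix d d ℂ → Matrix d d ℂ) : Prop :=
  (∀ x y, E (x + y) = E x + E y) ∧
  (∀ (z : ℂ) (x : Matrix d d ℂ), E (z • x) = z • E x) ∧
  E 1 = 1 ∧
  IsCP E ∧
  (∀ x, E x ∈ S) ∧
  (∀ c ∈ S, E c = c) ∧
  (∀ c₁ ∈ S, ∀ c₂ ∈ S, ∀ x, E (c₁ * x * c₂) = c₁ * E x * c₂)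

/-!
A conditional expectation `E` onto `S` has a trace density `T`, i.e. `Tr (E y) = Tr (T y)`,
and the bimodule property forces `T` to commute with `S`. Since `E` takes values in `S`, a
state `D` with marginal `D_C ∈ S` is `E`-preserved exactly when `D = D_C T`. Applied to `ρ`
this gives `ρ = ρ_C T`, hence `T ≥ 0` and `ρ^{1/2} ρ_C^{-1/2} = T^{1/2}`, because square roots
of commuting positive matrices multiply. The same computation shows `ω = ω_C T` if and only
if `ω^{1/2} ω_C^{-1/2} = T^{1/2}`.
-/

section SqrtMul

variable {A : Type*} [Ring A] [StarRing A] [Algebra ℝ A] [TopologicalSpace A]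
  [PartialOrder A] [StarOrderedRing A] [ContinuousFunctionalCalculus ℝ A IsSelfAdjoint]
  [IsTopologicalRing A] [T2Space A] [NonnegSpectrumClass ℝ A]

lemma CFC.sqrt_mul_of_commute {a b : A} (ha : 0 ≤ a) (hb : 0 ≤ b) (h : Commute a b) :
    CFC.sqrt (a * b) = CFC.sqrt a * CFC.sqrt b := by
  have hs : Commute (CFC.sqrt a) (CFC.sqrt b) := by
    rw [CFC.sqrt_eq_cfc, CFC.sqrt_eq_cfc]
    exact ((h.cfc_nnreal _).symm.cfc_nnreal _).symm
  refine CFC.sqrt_unique ?_ (hs.mul_nonneg (CFC.sqrt_nonneg a) (CFC.sqrt_nonneg b))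
  rw [hs.symm.mul_mul_mul_comm, CFC.sqrt_mul_sqrt_self a, CFC.sqrt_mul_sqrt_self b]

end SqrtMul

namespace Matrix

theorem exists_trace_mul_eq {m R : Type*} [Fintype m] [DecidableEq m] [CommSemiring R]
    (f : Matrix m m R →ₗ[R] R) : ∃ T : Matrix m m R, ∀ y, f y = (T * y).trace := by
  refine ⟨of fun j i => f (single i j 1), fun y => ?_⟩
  suffices f = traceLinearMap m R R ∘ₗ LinearMap.mulLeft R (of fun j i => f (single i j 1)) from
    congr($this y)
  apply ext_linearMap
  intro i j
  ext
  simp [trace_mul_single]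

variable {𝕜 n : Type*} [RCLike 𝕜] [Fintype n] [DecidableEq n]

lemma PosDef.nonneg_of_commute_of_nonneg_mul {B T : Matrix n n 𝕜} (hB : B.PosDef)
    (h : Commute B T) (hBT : 0 ≤ B * T) : 0 ≤ T := by
  rw [← nonsing_inv_mul_cancel_left (A := B) T (B.isUnit_iff_isUnit_det.mp hB.isUnit)]
  refine Commute.mul_nonneg hB.inv.posSemidef.nonneg hBT ?_
  obtain ⟨u, rfl⟩ := hB.isUnit
  rw [← coe_units_inv]
  exact ((Commute.refl _).mul_right h).units_inv_left

theorem eq_mul_iff_sqrt_mul_inv_sqrt_eq {A B T : Matrix n n 𝕜} (hA : 0 ≤ A) (hB : B.PosDef)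
    (hT : 0 ≤ T) (h : Commute B T) :
    A = B * T ↔ CFC.sqrt A * (CFC.sqrt B)⁻¹ = CFC.sqrt T := by
  have hB₀ : 0 ≤ B := hB.posSemidef.nonneg
  have := ((CFC.isUnit_sqrt_iff B).mpr hB.isUnit).invertible
  rw [mul_inv_eq_iff_eq_mul_of_invertible, ← CFC.sqrt_mul_of_commute hT hB₀ h.symm, ← h.eq,
    CFC.sqrt_eq_iff A _ hA (CFC.sqrt_nonneg _), CFC.sqrt_mul_sqrt_self _ (h.mul_nonneg hB₀ hT),
    eq_comm]

end Matrix

namespace IsCondExpOn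

variable {d : Type*} [Fintype d] [DecidableEq d] {S : Set (Matrix d d ℂ)}
  {E : Matrix d d ℂ → Matrix d d ℂ}

theorem map_mul_left (hE : IsCondExpOn S E) (h1 : 1 ∈ S) {c : Matrix d d ℂ} (hc : c ∈ S)
    (x : Matrix d d ℂ) : E (c * x) = c * E x := by
  obtain ⟨-, -, -, -, -, -, hbimod⟩ := hE
  simpa using hbimod c hc 1 h1 x

theorem map_mul_right (hE : IsCondExpOn S E) (h1 : 1 ∈ S) {c : Matrix d d ℂ} (hc : c ∈ S)
    (x : Matrix d d ℂ) : E (x * c) = E x * c := by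
  obtain ⟨-, -, -, -, -, -, hbimod⟩ := hE
  simpa using hbimod 1 h1 c hc x

theorem map_mem (hE : IsCondExpOn S E) (x : Matrix d d ℂ) : E x ∈ S :=
  hE.2.2.2.2.1 x

theorem exists_trace_eq_trace_mul (hE : IsCondExpOn S E) :
    ∃ T : Matrix d d ℂ, ∀ y, (E y).trace = (T * y).trace :=
  exists_trace_mul_eq (traceLinearMap d ℂ ℂ ∘ₗ IsLinearMap.mk' E ⟨hE.1, hE.2.1⟩)

theorem commute_of_trace_eq (hE : IsCondExpOn S E) (h1 : 1 ∈ S) {T c : Matrix d d ℂ}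
    (hT : ∀ y, (E y).trace = (T * y).trace) (hc : c ∈ S) : Commute T c := by
  refine (ext_iff_trace_mul_right.mpr fun x => ?_ : T * c = c * T)
  calc (T * c * x).trace = (E (c * x)).trace := by rw [hT, mul_assoc]
    _ = (E (x * c)).trace := by rw [hE.map_mul_left h1 hc, hE.map_mul_right h1 hc, trace_mul_comm]
    _ = (c * T * x).trace := by rw [hT, ← mul_assoc, trace_mul_comm, mul_assoc]

theorem preserves_iff_mul_eq (hE : IsCondExpOn S E) (h1 : 1 ∈ S) {T D DC : Matrix d d ℂ}
    (hT : ∀ y, (E y).trace = (T * y).trace) (hDC : DC ∈ S)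
    (hmarg : ∀ c ∈ S, (DC * c).trace = (D * c).trace) :
    (∀ x, (D * E x).trace = (D * x).trace) ↔ DC * T = D := by
  have hDE : ∀ x, (D * E x).trace = (DC * T * x).trace := fun x => by
    rw [← hmarg _ (hE.map_mem x), trace_mul_comm, ← hE.map_mul_right h1 hDC, hT,
      ← mul_assoc, trace_mul_comm, mul_assoc]
  simp only [hDE, ← ext_iff_trace_mul_right]

end IsCondExpOn

theorem omega_preserved_iff_sufficiency_general
    {n : ℕ} (S : StarSubalgebra ℂ (Matrix (Fin n) (Fin n) ℂ))
    (ρ ω : Matrix (Fin n) (Fin n) ℂ) (hρ : ρ.PosDef) (hω : ω.PosDef)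
    (ρC ωC : Matrix (Fin n) (Fin n) ℂ) (hρCS : ρC ∈ S) (hωCS : ωC ∈ S)
    (hρC : ρC.PosDef) (hωC : ωC.PosDef)
    (hρCtr : ∀ c ∈ S, (ρC * c).trace = (ρ * c).trace)
    (hωCtr : ∀ c ∈ S, (ωC * c).trace = (ω * c).trace)
    (E : Matrix (Fin n) (Fin n) ℂ → Matrix (Fin n) (Fin n) ℂ)
    (hE : IsCondExpOn (S : Set (Matrix (Fin n) (Fin n) ℂ)) E)
    (hEρ : ∀ x, (ρ * E x).trace = (ρ * x).trace) :
    (∀ x, (ω * E x).trace = (ω * x).trace) ↔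
      CFC.sqrt ω * (CFC.sqrt ωC)⁻¹ =
        CFC.sqrt ρ * (CFC.sqrt ρC)⁻¹ := by
  have h1 : (1 : Matrix (Fin n) (Fin n) ℂ) ∈ (S : Set (Matrix (Fin n) (Fin n) ℂ)) := S.one_mem
  obtain ⟨T, hT⟩ := hE.exists_trace_eq_trace_mul
  have hρT : ρC * T = ρ := (hE.preserves_iff_mul_eq h1 hT hρCS hρCtr).mp hEρ
  have hTρC : Commute ρC T := (hE.commute_of_trace_eq h1 hT hρCS).symm
  have hT₀ : 0 ≤ T := hρC.nonneg_of_commute_of_nonneg_mul hTρC (hρT ▸ hρ.posSemidef.nonneg)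
  rw [(eq_mul_iff_sqrt_mul_inv_sqrt_eq hρ.posSemidef.nonneg hρC hT₀ hTρC).mp hρT.symm,
    hE.preserves_iff_mul_eq h1 hT hωCS hωCtr, eq_comm]
  exact eq_mul_iff_sqrt_mul_inv_sqrt_eq hω.posSemidef.nonneg hωC hT₀
    (hE.commute_of_trace_eq h1 hT hωCS).symm

/-- Petz's sufficiency theorem in matrix algebras: a `ρ`-preserving conditional
expectation onto `S` also preserves `ω` iff the sufficiency condition
`ω^{1/2} ω_C^{-1/2} = ρ^{1/2} ρ_C^{-1/2}` holds. -/
theorem omega_preserved_iff_sufficiency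
    {n : ℕ} (S : StarSubalgebra ℂ (Matrix (Fin n) (Fin n) ℂ))
    (ρ ω : Matrix (Fin n) (Fin n) ℂ) (hρ : ρ.PosDef) (hω : ω.PosDef)
    (hρtr : ρ.trace = 1) (hωtr : ω.trace = 1)
    (ρC ωC : Matrix (Fin n) (Fin n) ℂ) (hρCS : ρC ∈ S) (hωCS : ωC ∈ S)
    (hρC : ρC.PosDef) (hωC : ωC.PosDef)
    (hρCtr : ∀ c ∈ S, (ρC * c).trace = (ρ * c).trace)
    (hωCtr : ∀ c ∈ S, (ωC * c).trace = (ω * c).trace)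
    (E : Matrix (Fin n) (Fin n) ℂ → Matrix (Fin n) (Fin n) ℂ)
    (hE : IsCondExpOn (S : Set (Matrix (Fin n) (Fin n) ℂ)) E)
    (hEρ : ∀ x, (ρ * E x).trace = (ρ * x).trace) :
    (∀ x, (ω * E x).trace = (ω * x).trace) ↔
      CFC.sqrt ω * (CFC.sqrt ωC)⁻¹ =
        CFC.sqrt ρ * (CFC.sqrt ρC)⁻¹ :=
  omega_preserved_iff_sufficiency_general S ρ ω hρ hω ρC ωC hρCS hωCS hρC hωC hρCtr hωCtr E hE hEρ
end
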